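/- Let G = PSL_2(27) and let Q be a Sylow 2-subgroup of G (of order 4). Then there exists g ∈ G such that every element of the coset gQ has even order. -/

import Mathlib

/-!
If some power `Sᵏ` of `S ∈ SL₂(F)` has trace `0`, then `Sᵏ` squares to `-1` by Cayley–Hamilton,
so the image of `S` in `PSL₂(F)` has an involution among its powers and hence even order. We use
`k = 7`: for `det A = 1`, `tr(A⁷) = T(tr A)` with `T(x) = x⁷ - 7x⁵ + 14x³ - 7x`, and
`T(x) ≡ x (x³ + x² - 1)(x³ - x² + 1)` modulo `3`.

Over `F₂₇` let `t` be a root of the irreducible cubic `X³ + X² - 1`; its other roots are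
`t³ = 1 - t²` and `t⁹ = t² - t + 1`. The images of `i = [[0, 1], [-1, 0]]` and
`j = [[1, 1], [1, -1]]` generate a Klein four group `V ≤ PSL₂(27)`, which is a Sylow subgroup
since `|PSL₂(27)| = 9828 = 4 · 2457`. The coset of `V` through the image of
`S = [[1, t + t²], [t + t², t - 1]]` consists of the images of `S, S i, S j, S i j`, whose traces
`t, 0, -t⁹, -t³` are all zeros of `T`. Every Sylow `2`-subgroup is conjugate to `V`, and
conjugation preserves orders.
-/

open Matrix Pointwise
open scoped MatrixGroups

namespace Matrix

variable {R : Type*} [CommRing R]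

theorem mul_self_fin_two (A : Matrix (Fin 2) (Fin 2) R) :
    A * A = A.trace • A - A.det • (1 : Matrix (Fin 2) (Fin 2) R) := by
  ext i j
  fin_cases i <;> fin_cases j <;>
    simp [mul_apply, Fin.sum_univ_two, trace_fin_two, det_fin_two] <;> ring

theorem trace_pow_add_two_of_det_eq_one {A : Matrix (Fin 2) (Fin 2) R} (hA : A.det = 1) (n : ℕ) :
    (A ^ (n + 2)).trace = A.trace * (A ^ (n + 1)).trace - (A ^ n).trace := by
  rw [pow_add, sq, mul_self_fin_two, hA, one_smul, mul_sub, mul_one, mul_smul_comm, ← pow_succ,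
    trace_sub, trace_smul, smul_eq_mul]

theorem trace_pow_seven_of_det_eq_one {A : Matrix (Fin 2) (Fin 2) R} (hA : A.det = 1) :
    (A ^ 7).trace = A.trace ^ 7 - 7 * A.trace ^ 5 + 14 * A.trace ^ 3 - 7 * A.trace := by
  have h := trace_pow_add_two_of_det_eq_one hA
  rw [h 5, h 4, h 3, h 2, h 1, h 0, zero_add]
  simp only [pow_zero, pow_one, trace_one, Fintype.card_fin]
  push_cast
  ring

theorem trace_pow_seven_of_charP_three [CharP R 3] {A : Matrix (Fin 2) (Fin 2) R}
    (hA : A.det = 1) :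
    (A ^ 7).trace =
      A.trace * (A.trace ^ 3 + A.trace ^ 2 - 1) * (A.trace ^ 3 - A.trace ^ 2 + 1) := by
  rw [trace_pow_seven_of_det_eq_one hA]
  linear_combination (-2 * A.trace ^ 5 + 4 * A.trace ^ 3 - 2 * A.trace) * CharP.ofNat_eq_zero R 3

end Matrix

namespace Matrix.ProjectiveSpecialLinearGroup

open QuotientGroup

variable {K : Type*} [Field K]

theorem mk_mul_self_eq_one_of_trace_eq_zero {R : Type*} [CommRing R] {S : SL(2, R)}
    (hS : (S : Matrix (Fin 2) (Fin 2) R).trace = 0) : (mk S * mk S : PSL(2, R)) = 1 := by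
  have hSS : S * S = -1 := by
    ext : 1
    simp [mul_self_fin_two, hS]
  rw [← QuotientGroup.mk_mul, hSS, QuotientGroup.eq_one_iff,
    Matrix.SpecialLinearGroup.mem_center_iff]
  exact ⟨-1, by norm_num, by ext i j; fin_cases i <;> fin_cases j <;> simp⟩

theorem mk_ne_one_of_trace_eq_zero (hK : ringChar K ≠ 2) {S : SL(2, K)}
    (hS : (S : Matrix (Fin 2) (Fin 2) K).trace = 0) : (mk S : PSL(2, K)) ≠ 1 := by
  rw [Ne, QuotientGroup.eq_one_iff, Matrix.SpecialLinearGroup.mem_center_iff]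
  rintro ⟨r, hr, hrS⟩
  have h2r : (2 : K) * r = 0 := by simpa [← hrS, trace_fin_two, two_mul] using hS
  rw [mul_eq_zero, or_iff_right (Ring.two_ne_zero hK)] at h2r
  simp [h2r] at hr

theorem orderOf_mk_eq_two_of_trace_eq_zero (hK : ringChar K ≠ 2) {S : SL(2, K)}
    (hS : (S : Matrix (Fin 2) (Fin 2) K).trace = 0) : orderOf (mk S : PSL(2, K)) = 2 :=
  orderOf_eq_prime (by rw [sq, mk_mul_self_eq_one_of_trace_eq_zero hS])
    (mk_ne_one_of_trace_eq_zero hK hS)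

theorem two_dvd_orderOf_mk_of_trace_pow_eq_zero (hK : ringChar K ≠ 2) {S : SL(2, K)} {k : ℕ}
    (hS : ((S : Matrix (Fin 2) (Fin 2) K) ^ k).trace = 0) : 2 ∣ orderOf (mk S : PSL(2, K)) := by
  have h := orderOf_pow_dvd (x := (mk S : PSL(2, K))) k
  rwa [← QuotientGroup.mk_pow, orderOf_mk_eq_two_of_trace_eq_zero hK (by simpa using hS)] at h

theorem card_mul_two (hK : ringChar K ≠ 2) : Nat.card PSL(2, K) * 2 = Nat.card SL(2, K) := by
  have hcenter : Nat.card (Subgroup.center SL(2, K)) = 2 := by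
    rw [Nat.card_congr (Matrix.SpecialLinearGroup.center_equiv_rootsOfUnity' 0).toEquiv]
    exact (IsPrimitiveRoot.neg_one (ringChar K) hK).card_rootsOfUnity
  rw [Subgroup.card_eq_card_quotient_mul_card_subgroup (Subgroup.center SL(2, K)), hcenter]

end Matrix.ProjectiveSpecialLinearGroup

theorem Matrix.SpecialLinearGroup.card_mul_card_sub_one {K : Type*} [Field K] {n : ℕ}
    (hn : n ≠ 0) : Nat.card SL(n, K) * (Nat.card K - 1) = Nat.card (GL (Fin n) K) := by
  have : Nonempty (Fin n) := ⟨⟨0, Nat.pos_of_ne_zero hn⟩⟩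
  let det : GL (Fin n) K →* Kˣ := GeneralLinearGroup.det
  have hker : Nat.card det.ker = Nat.card SL(n, K) := Nat.card_congr
    { toFun g := ⟨g.1, by simpa [det] using congrArg Units.val (MonoidHom.mem_ker.mp g.2)⟩
      invFun S := ⟨Matrix.SpecialLinearGroup.toGL S, by simp [det]⟩
      left_inv g := Subtype.ext (Units.ext rfl)
      right_inv S := rfl }
  rw [← hker, ← Nat.card_units, ← Subgroup.card_top (G := Kˣ),
    ← MonoidHom.range_eq_top.mpr (GeneralLinearGroup.det_surjective (n := Fin n) (R := K)),
    ← Subgroup.index_ker, Subgroup.card_mul_index]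

namespace Subgroup

variable {G : Type*} [Group G]

def kleinFour (a b : G) (ha : a * a = 1) (hb : b * b = 1) (hab : a * b * (a * b) = 1) :
    Subgroup G where
  carrier := {1, a, b, a * b}
  one_mem' := by simp
  mul_mem' := by
    have ha' (x : G) : a * (a * x) = x := by rw [← mul_assoc, ha, one_mul]
    have hba : b * a = a * b := by
      have h := inv_eq_of_mul_eq_one_right hab
      rwa [_root_.mul_inv_rev, inv_eq_of_mul_eq_one_right ha, inv_eq_of_mul_eq_one_right hb] at h
    have hba' (x : G) : b * (a * x) = a * (b * x) := by rw [← mul_assoc, hba, mul_assoc]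
    intro x y hx hy
    simp only [Set.mem_insert_iff, Set.mem_singleton_iff] at hx hy ⊢
    rcases hx with rfl | rfl | rfl | rfl <;> rcases hy with rfl | rfl | rfl | rfl <;>
      simp [mul_assoc, ha, hb, ha', hba, hba']
  inv_mem' := by
    have hab' : (a * b)⁻¹ = a * b := inv_eq_of_mul_eq_one_right hab
    intro x hx
    simp only [Set.mem_insert_iff, Set.mem_singleton_iff] at hx ⊢
    rcases hx with rfl | rfl | rfl | rfl <;>
      simp [inv_eq_of_mul_eq_one_right ha, inv_eq_of_mul_eq_one_right hb, hab']

theorem card_kleinFour {a b : G} (ha : a * a = 1) (hb : b * b = 1) (hab : a * b * (a * b) = 1)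
    (ha1 : a ≠ 1) (hb1 : b ≠ 1) (hab1 : a * b ≠ 1) : Nat.card (kleinFour a b ha hb hab) = 4 := by
  have hne : a ≠ b := by rintro rfl; exact hab1 ha
  rw [← SetLike.coe_sort_coe, Nat.card_coe_set_eq]
  change ({1, a, b, a * b} : Set G).ncard = 4
  rw [Set.ncard_insert_of_notMem, Set.ncard_insert_of_notMem, Set.ncard_pair]
  · simpa using ha1
  · simpa [hne] using hb1
  · simpa [eq_comm (a := (1 : G))] using ⟨ha1, hb1, hab1⟩

end Subgroup

theorem Sylow.exists_forall_dvd_orderOf_smul {G : Type*} [Group G] [Finite G] {p n : ℕ}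
    [Fact p.Prime] (P Q : Sylow p G) {g : G} (hg : ∀ x ∈ P, n ∣ orderOf (g * x)) :
    ∃ g' : G, ∀ h ∈ g' • ((Q : Subgroup G) : Set G), n ∣ orderOf h := by
  obtain ⟨c, rfl⟩ := MulAction.exists_smul_eq G P Q
  refine ⟨c * g * c⁻¹, ?_⟩
  rintro _ ⟨h, hh, rfl⟩
  rw [SetLike.mem_coe, Sylow.coe_subgroup_smul,
    Subgroup.mem_pointwise_smul_iff_inv_smul_mem] at hh
  have hconj := (MulAut.conj c).orderOf_eq (g * (c⁻¹ * h * c))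
  rw [MulAut.smul_def, MulAut.conj_inv_apply] at hh
  rw [MulAut.conj_apply] at hconj
  change n ∣ orderOf (c * g * c⁻¹ * h)
  rw [show c * g * c⁻¹ * h = c * (g * (c⁻¹ * h * c)) * c⁻¹ by group, hconj]
  exact hg _ hh

namespace SL2CharThree

variable {F : Type*} [Field F]

def quatI : SL(2, F) := ⟨!![0, 1; -1, 0], by simp [det_fin_two]⟩

theorem coe_quatI : ((quatI : SL(2, F)) : Matrix (Fin 2) (Fin 2) F) = !![0, 1; -1, 0] := rfl

theorem trace_quatI : ((quatI : SL(2, F)) : Matrix (Fin 2) (Fin 2) F).trace = 0 := by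
  simp [coe_quatI, trace_fin_two_of]

variable [CharP F 3]

theorem ringChar_ne_two : ringChar F ≠ 2 := by
  rw [ringChar.eq F 3]; norm_num

theorem conjugate_roots_of_cube_add_sq_sub_one {t : F} (ht : t ^ 3 + t ^ 2 - 1 = 0) :
    (1 - t ^ 2) ^ 3 + (1 - t ^ 2) ^ 2 - 1 = 0 ∧
      (t ^ 2 - t + 1) ^ 3 + (t ^ 2 - t + 1) ^ 2 - 1 = 0 := by
  have h3 : (3 : F) = 0 := CharP.ofNat_eq_zero F 3
  constructor
  · linear_combination (-1 + t ^ 2 - t ^ 3) * ht + (t ^ 4 - t ^ 2) * h3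
  · linear_combination (-1 - t - t ^ 2 + t ^ 3) * ht
      + (-2 * t + 3 * t ^ 2 - 2 * t ^ 3 + 3 * t ^ 4 - t ^ 5) * h3

theorem two_dvd_orderOf_mk_of_trace_eq_or_eq_neg {S : SL(2, F)} {r : F}
    (hr : r ^ 3 + r ^ 2 - 1 = 0) (hS : (S : Matrix (Fin 2) (Fin 2) F).trace = r ∨
      (S : Matrix (Fin 2) (Fin 2) F).trace = -r) :
    2 ∣ orderOf (QuotientGroup.mk S : PSL(2, F)) := by
  apply Matrix.ProjectiveSpecialLinearGroup.two_dvd_orderOf_mk_of_trace_pow_eq_zero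
    ringChar_ne_two (k := 7)
  rw [trace_pow_seven_of_charP_three S.prop]
  rcases hS with hS | hS <;> rw [hS]
  · rw [hr, mul_zero, zero_mul]
  · linear_combination r * ((-r) ^ 3 + (-r) ^ 2 - 1) * hr

def quatJ : SL(2, F) :=
  ⟨!![1, 1; 1, -1], by rw [det_fin_two_of]; linear_combination -CharP.ofNat_eq_zero F 3⟩

def evenCosetRep (t : F) (ht : t ^ 3 + t ^ 2 - 1 = 0) : SL(2, F) :=
  ⟨!![1, t + t ^ 2; t + t ^ 2, t - 1], by
    rw [det_fin_two_of]; linear_combination -(t + 1) * ht - CharP.ofNat_eq_zero F 3⟩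

theorem coe_quatJ : ((quatJ : SL(2, F)) : Matrix (Fin 2) (Fin 2) F) = !![1, 1; 1, -1] := rfl

theorem coe_evenCosetRep {t : F} (ht : t ^ 3 + t ^ 2 - 1 = 0) :
    (evenCosetRep t ht : Matrix (Fin 2) (Fin 2) F) = !![1, t + t ^ 2; t + t ^ 2, t - 1] := rfl

theorem trace_quatJ : ((quatJ : SL(2, F)) : Matrix (Fin 2) (Fin 2) F).trace = 0 := by
  simp [coe_quatJ, trace_fin_two_of]

theorem trace_quatI_mul_quatJ :
    ((quatI * quatJ : SL(2, F)) : Matrix (Fin 2) (Fin 2) F).trace = 0 := by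
  simp [coe_quatI, coe_quatJ, trace_fin_two_of]

section CosetTraces

variable {t : F} (ht : t ^ 3 + t ^ 2 - 1 = 0)

theorem trace_evenCosetRep : (evenCosetRep t ht : Matrix (Fin 2) (Fin 2) F).trace = t := by
  simp [coe_evenCosetRep, trace_fin_two_of]

theorem trace_evenCosetRep_mul_quatI :
    ((evenCosetRep t ht * quatI : SL(2, F)) : Matrix (Fin 2) (Fin 2) F).trace = 0 := by
  simp only [Matrix.SpecialLinearGroup.coe_mul, coe_evenCosetRep, coe_quatI, mul_fin_two,
    trace_fin_two_of]
  ring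

theorem trace_evenCosetRep_mul_quatJ :
    ((evenCosetRep t ht * quatJ : SL(2, F)) : Matrix (Fin 2) (Fin 2) F).trace =
      -(t ^ 2 - t + 1) := by
  simp only [Matrix.SpecialLinearGroup.coe_mul, coe_evenCosetRep, coe_quatJ, mul_fin_two,
    trace_fin_two_of]
  linear_combination (1 + t ^ 2) * CharP.ofNat_eq_zero F 3

theorem trace_evenCosetRep_mul_quatI_mul_quatJ :
    ((evenCosetRep t ht * (quatI * quatJ) : SL(2, F)) : Matrix (Fin 2) (Fin 2) F).trace =
      -(1 - t ^ 2) := by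
  simp only [Matrix.SpecialLinearGroup.coe_mul, coe_evenCosetRep, coe_quatI, coe_quatJ,
    mul_fin_two, trace_fin_two_of]
  linear_combination (1 - t - t ^ 2) * CharP.ofNat_eq_zero F 3

end CosetTraces

open Matrix.ProjectiveSpecialLinearGroup QuotientGroup

def quatKleinFour : Subgroup PSL(2, F) :=
  Subgroup.kleinFour (mk quatI) (mk quatJ) (mk_mul_self_eq_one_of_trace_eq_zero trace_quatI)
    (mk_mul_self_eq_one_of_trace_eq_zero trace_quatJ)
    (by rw [← QuotientGroup.mk_mul]
        exact mk_mul_self_eq_one_of_trace_eq_zero trace_quatI_mul_quatJ)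

theorem card_quatKleinFour : Nat.card (quatKleinFour : Subgroup PSL(2, F)) = 4 :=
  Subgroup.card_kleinFour _ _ _ (mk_ne_one_of_trace_eq_zero ringChar_ne_two trace_quatI)
    (mk_ne_one_of_trace_eq_zero ringChar_ne_two trace_quatJ)
    (by rw [← QuotientGroup.mk_mul]
        exact mk_ne_one_of_trace_eq_zero ringChar_ne_two trace_quatI_mul_quatJ)

theorem two_dvd_orderOf_mk_evenCosetRep_mul {t : F} (ht : t ^ 3 + t ^ 2 - 1 = 0) :
    ∀ x ∈ (quatKleinFour : Subgroup PSL(2, F)), 2 ∣ orderOf (mk (evenCosetRep t ht) * x) := by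
  obtain ⟨hv, hu⟩ := conjugate_roots_of_cube_add_sq_sub_one ht
  rintro x (rfl | rfl | rfl | rfl)
  · rw [mul_one]
    exact two_dvd_orderOf_mk_of_trace_eq_or_eq_neg ht (.inl (trace_evenCosetRep ht))
  · rw [← QuotientGroup.mk_mul, orderOf_mk_eq_two_of_trace_eq_zero ringChar_ne_two
      (trace_evenCosetRep_mul_quatI ht)]
  · rw [← QuotientGroup.mk_mul]
    exact two_dvd_orderOf_mk_of_trace_eq_or_eq_neg hu (.inr (trace_evenCosetRep_mul_quatJ ht))
  · rw [← QuotientGroup.mk_mul, ← QuotientGroup.mk_mul]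
    exact two_dvd_orderOf_mk_of_trace_eq_or_eq_neg hv
      (.inr (trace_evenCosetRep_mul_quatI_mul_quatJ ht))

end SL2CharThree

open Polynomial in
theorem GaloisField.exists_aeval_eq_zero_of_irreducible {p n : ℕ} [Fact p.Prime] (hn : n ≠ 0)
    {f : (ZMod p)[X]} (hf : Irreducible f) (hdvd : f.natDegree ∣ n) :
    ∃ x : GaloisField p n, aeval x f = 0 := by
  have hf_dvd : f ∣ X ^ p ^ n - X := by
    simpa using (hf.natDegree_dvd_iff_dvd_X_pow_card_pow_sub_X).mp hdvd
  have hsplit : Splits (f.map (algebraMap (ZMod p) (GaloisField p n))) :=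
    (SplittingField.splits (X ^ p ^ n - X : (ZMod p)[X])).of_dvd
      (map_ne_zero (FiniteField.X_pow_card_pow_sub_X_ne_zero _ hn (Fact.out : p.Prime).one_lt))
      (Polynomial.map_dvd _ hf_dvd)
  obtain ⟨x, hx⟩ := hsplit.exists_eval_eq_zero (by
    rw [degree_map]; exact (degree_pos_of_irreducible hf).ne')
  exact ⟨x, by rwa [eval_map, ← aeval_def] at hx⟩

open Polynomial in
theorem GaloisField.exists_cube_add_sq_sub_one_eq_zero :
    ∃ t : GaloisField 3 3, t ^ 3 + t ^ 2 - 1 = 0 := by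
  have hdeg : (X ^ 3 + X ^ 2 - 1 : (ZMod 3)[X]).natDegree = 3 := by compute_degree!
  have hirr : Irreducible (X ^ 3 + X ^ 2 - 1 : (ZMod 3)[X]) :=
    irreducible_of_degree_le_three_of_not_isRoot (by rw [hdeg]; decide)
      (by simp only [IsRoot, eval_sub, eval_add, eval_pow, eval_X, eval_one]; decide)
  obtain ⟨t, ht⟩ := exists_aeval_eq_zero_of_irreducible three_ne_zero hirr (by rw [hdeg])
  exact ⟨t, by simpa using ht⟩

theorem Matrix.ProjectiveSpecialLinearGroup.card_galoisField_three_three :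
    Nat.card PSL(2, GaloisField 3 3) = 9828 := by
  have hq : Nat.card (GaloisField 3 3) = 27 := GaloisField.card 3 3 three_ne_zero
  have hGL : Nat.card (GL (Fin 2) (GaloisField 3 3)) = 511056 := by
    have := Fintype.ofFinite (GaloisField 3 3)
    rw [Matrix.card_GL_field, Fintype.card_eq_nat_card, hq]
    simp [Fin.prod_univ_two]
  have hSL := Matrix.SpecialLinearGroup.card_mul_card_sub_one (K := GaloisField 3 3) two_ne_zero
  have hPSL := card_mul_two (K := GaloisField 3 3) SL2CharThree.ringChar_ne_two
  rw [hq, hGL] at hSL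
  omega

noncomputable def sylowQuatKleinFour : Sylow 2 PSL(2, GaloisField 3 3) :=
  Sylow.ofCard SL2CharThree.quatKleinFour <| by
    rw [SL2CharThree.card_quatKleinFour,
      Matrix.ProjectiveSpecialLinearGroup.card_galoisField_three_three,
      show (9828 : ℕ) = 2 ^ 2 * 2457 by norm_num,
      Nat.factorization_mul_apply_of_coprime (by norm_num),
      Nat.factorization_eq_zero_of_not_dvd (show ¬ 2 ∣ 2457 by norm_num), Nat.factorization_pow]
    simp [Nat.prime_two.factorization_self]

/-- The analogue of Thompson's theorem for `G = PSL₂(27)` (where `F₂₇ = GaloisField 3 3`):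
there is a coset `gQ` of a Sylow `2`-subgroup `Q` (of order `4`) all of whose elements
have even order. -/
theorem thompson_PSL2_27
    (Q : Sylow 2 (Matrix.ProjectiveSpecialLinearGroup (Fin 2) (GaloisField 3 3))) :
    ∃ g : Matrix.ProjectiveSpecialLinearGroup (Fin 2) (GaloisField 3 3),
      ∀ h ∈ g • ((Q : Subgroup (Matrix.ProjectiveSpecialLinearGroup (Fin 2) (GaloisField 3 3))) :
          Set (Matrix.ProjectiveSpecialLinearGroup (Fin 2) (GaloisField 3 3))),
        2 ∣ orderOf h := by
  obtain ⟨t, ht⟩ := GaloisField.exists_cube_add_sq_sub_one_eq_zero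
  exact sylowQuatKleinFour.exists_forall_dvd_orderOf_smul Q
    (SL2CharThree.two_dvd_orderOf_mk_evenCosetRep_mul ht)
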